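/- Set λ = 5√2/√3 and let γ be a real number with γ ≠ 2. Define the shifted map components X̄(X,Y) = W₁(1 + X, Y) − 1 and Ȳ(X,Y) = W₂(1 + X, Y), which fix the origin (corresponding to the fixed point B = (1,0)), and define ψ(Y) = ((10 − 3γ)/(2(3γ − 6)))·Y². Then: (i) the center-manifold invariance residual R(Y) = ψ(Ȳ(ψ(Y), Y)) − X̄(ψ(Y), Y) satisfies R(Y) = O(Y⁴) as Y → 0; (ii) the reduced map G(Y) = Ȳ(ψ(Y), Y) satisfies G(Y) = −Y + (5/6)·((2 − 3γ)/(γ − 2))·Y³ + O(Y⁵) as Y → 0; (iii) G(0) = 0, G'(0) = −1, G''(0) = 0, and the Schwarzian derivative SG(0) = −G'''(0) − (3/2)·G''(0)² equals 5(3γ − 2)/(γ − 2), which is negative for 2/3 < γ < 2 and positive for 0 ≤ γ < 2/3. -/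

import Mathlib

open Asymptotics Filter

noncomputable def f (γ lam x y : ℝ) : ℝ :=
  (3/2) * x * (2*x^2 + γ*(1 - x^2 - y^2)) - 3*x + Real.sqrt (3/2) * lam * y^2

noncomputable def g (γ lam x y : ℝ) : ℝ :=
  (3/2) * y * (2*x^2 + γ*(1 - x^2 - y^2)) - Real.sqrt (3/2) * lam * x * y

/-- The unit-step Euler discretization map W(x,y) = (x + f(x,y), y + g(x,y)). -/
noncomputable def W (γ lam : ℝ) (p : ℝ × ℝ) : ℝ × ℝ :=
  (p.1 + f γ lam p.1 p.2, p.2 + g γ lam p.1 p.2)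

/-- The map W with λ = 5√2/√3, shifted so that the fixed point B = (1,0) is at
the origin: first component. -/
noncomputable def Xbar (γ X Y : ℝ) : ℝ :=
  (W γ (5 * Real.sqrt 2 / Real.sqrt 3) (1 + X, Y)).1 - 1

/-- The shifted map: second component. -/
noncomputable def Ybar (γ X Y : ℝ) : ℝ :=
  (W γ (5 * Real.sqrt 2 / Real.sqrt 3) (1 + X, Y)).2

/-- The approximate center manifold X = ψ(Y) at B for λ = 5√2/√3. -/
noncomputable def ψ (γ Y : ℝ) : ℝ := ((10 - 3*γ) / (2*(3*γ - 6))) * Y^2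

/-- The reduced map G(Y) = Ȳ(ψ(Y), Y) on the approximate center manifold. -/
noncomputable def G (γ Y : ℝ) : ℝ := Ybar γ (ψ γ Y) Y

lemma hs5 : Real.sqrt (3/2) * (5 * Real.sqrt 2 / Real.sqrt 3) = 5 := by
  rw [show (3/2:ℝ) = 3/2 from rfl, Real.sqrt_div (by norm_num : (0:ℝ) ≤ 3)]
  have h2 : Real.sqrt 2 ≠ 0 := by positivity
  have h3 : Real.sqrt 3 ≠ 0 := by positivity
  field_simp

lemma D1' (A B : ℝ) : deriv (fun Y : ℝ => -Y + A*Y^3 + B*Y^5)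
    = fun Y => -1 + (3*A)*Y^2 + (5*B)*Y^4 := by
  funext Y
  have h : HasDerivAt (fun Y : ℝ => -Y + A*Y^3 + B*Y^5)
      (-1 + (3*A)*Y^2 + (5*B)*Y^4) Y := by
    have h1 := (hasDerivAt_id Y).neg
    have h3 := (hasDerivAt_pow 3 Y).const_mul A
    have h5 := (hasDerivAt_pow 5 Y).const_mul B
    have := (h1.add h3).add h5
    refine this.congr_deriv (by push_cast; ring) |>.congr_of_eventuallyEq (Filter.Eventually.of_forall fun _ => rfl)
  exact h.deriv

lemma D2' (a b c : ℝ) : deriv (fun Y : ℝ => a + b*Y^2 + c*Y^4)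
    = fun Y => (2*b)*Y + (4*c)*Y^3 := by
  funext Y
  have h : HasDerivAt (fun Y : ℝ => a + b*Y^2 + c*Y^4)
      ((2*b)*Y + (4*c)*Y^3) Y := by
    have h0 := hasDerivAt_const Y a
    have h2 := (hasDerivAt_pow 2 Y).const_mul b
    have h4 := (hasDerivAt_pow 4 Y).const_mul c
    have := (h0.add h2).add h4
    refine this.congr_deriv (by push_cast; ring) |>.congr_of_eventuallyEq (Filter.Eventually.of_forall fun _ => rfl)
  exact h.deriv

lemma D3' (b c : ℝ) : deriv (fun Y : ℝ => b*Y + c*Y^3)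
    = fun Y => b + (3*c)*Y^2 := by
  funext Y
  have h : HasDerivAt (fun Y : ℝ => b*Y + c*Y^3) (b + (3*c)*Y^2) Y := by
    have h1 := (hasDerivAt_id Y).const_mul b
    have h3 := (hasDerivAt_pow 3 Y).const_mul c
    have := h1.add h3
    refine this.congr_deriv (by push_cast; ring) |>.congr_of_eventuallyEq (Filter.Eventually.of_forall fun _ => rfl)
  exact h.deriv

noncomputable def Pfun (γ Y : ℝ) : ℝ :=
  (-2*((10 - 3*γ) / (2*(3*γ - 6)))*((5/6) * ((2 - 3*γ)/(γ - 2))) - (3/2)*((2 - γ)*((10 - 3*γ) / (2*(3*γ - 6)))^2 + ((10 - 3*γ) / (2*(3*γ - 6)))*(4*((10 - 3*γ) / (2*(3*γ - 6))) - γ*(2*((10 - 3*γ) / (2*(3*γ - 6))) + 1)))) + (((10 - 3*γ) / (2*(3*γ - 6)))*(((5/6) * ((2 - 3*γ)/(γ - 2)))^2 - 2*((3/2) * (2 - γ) * ((10 - 3*γ) / (2*(3*γ - 6)))^2)) - (3/2)*((10 - 3*γ) / (2*(3*γ - 6)))*(2 - γ)*((10 - 3*γ) / (2*(3*γ - 6)))^2)*Y^2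 + (2*((10 - 3*γ) / (2*(3*γ - 6)))*((5/6) * ((2 - 3*γ)/(γ - 2)))*((3/2) * (2 - γ) * ((10 - 3*γ) / (2*(3*γ - 6)))^2))*Y^4 + (((10 - 3*γ) / (2*(3*γ - 6)))*((3/2) * (2 - γ) * ((10 - 3*γ) / (2*(3*γ - 6)))^2)^2)*Y^6

lemma hG_eq (γ : ℝ) (hγ : γ ≠ 2) (Y : ℝ) :
    G γ Y = -Y + ((5/6) * ((2 - 3*γ)/(γ - 2)))*Y^3
      + (((3/2) * (2 - γ) * ((10 - 3*γ) / (2*(3*γ - 6)))^2))*Y^5 := by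
  have h1 : γ - 2 ≠ 0 := sub_ne_zero.mpr hγ
  have h2 : 3*γ - 6 ≠ 0 := by intro h; apply h1; linarith
  simp only [G, Ybar, W, g, ψ]
  rw [hs5]
  field_simp
  ring

lemma hR_eq (γ : ℝ) (hγ : γ ≠ 2) (Y : ℝ) :
    ψ γ (Ybar γ (ψ γ Y) Y) - Xbar γ (ψ γ Y) Y = Y^4 * Pfun γ Y := by
  have h1 : γ - 2 ≠ 0 := sub_ne_zero.mpr hγ
  have h2 : 3*γ - 6 ≠ 0 := by intro h; apply h1; linarith
  simp only [Xbar, Ybar, W, f, g, ψ, Pfun]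
  rw [hs5]
  field_simp
  ring


/-- For λ = 5√2/√3 and γ ≠ 2: (i) the invariance residual is O(Y⁴); (ii) the
reduced map is −Y + (5/6)((2 − 3γ)/(γ − 2))Y³ + O(Y⁵); (iii) G(0) = 0,
G'(0) = −1, G''(0) = 0, and the Schwarzian derivative SG(0) = 5(3γ − 2)/(γ − 2),
negative for 2/3 < γ < 2 and positive for 0 ≤ γ < 2/3. -/
theorem stmt_16 (γ : ℝ) (hγ : γ ≠ 2) :
    (fun Y : ℝ => ψ γ (Ybar γ (ψ γ Y) Y) - Xbar γ (ψ γ Y) Y) =O[nhds (0:ℝ)]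
      (fun Y : ℝ => Y^4) ∧
    (fun Y : ℝ => G γ Y - (-Y + (5/6) * ((2 - 3*γ)/(γ - 2)) * Y^3)) =O[nhds (0:ℝ)]
      (fun Y : ℝ => Y^5) ∧
    G γ 0 = 0 ∧
    deriv (G γ) 0 = -1 ∧
    iteratedDeriv 2 (G γ) 0 = 0 ∧
    -(iteratedDeriv 3 (G γ) 0) - (3/2) * (iteratedDeriv 2 (G γ) 0)^2 =
      5*(3*γ - 2)/(γ - 2) ∧
    (2/3 < γ ∧ γ < 2 → 5*(3*γ - 2)/(γ - 2) < 0) ∧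
    (0 ≤ γ ∧ γ < 2/3 → 5*(3*γ - 2)/(γ - 2) > 0) := by
  have h1 : γ - 2 ≠ 0 := sub_ne_zero.mpr hγ
  set A := (5/6) * ((2 - 3*γ)/(γ - 2)) with hA
  set B := (3/2) * (2 - γ) * ((10 - 3*γ) / (2*(3*γ - 6)))^2 with hB
  have hGf : G γ = fun Y => -Y + A*Y^3 + B*Y^5 := funext fun Y => hG_eq γ hγ Y
  refine ⟨?_, ?_, ?_, ?_, ?_, ?_, ?_, ?_⟩
  · -- residual O(Y^4)
    have hid : (fun Y : ℝ => ψ γ (Ybar γ (ψ γ Y) Y) - Xbar γ (ψ γ Y) Y)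
        = fun Y => Y^4 * Pfun γ Y := funext fun Y => hR_eq γ hγ Y
    rw [hid]
    have hc : Continuous (fun Y : ℝ => Pfun γ Y) := by
      unfold Pfun; fun_prop
    have hP : (fun Y : ℝ => Pfun γ Y) =O[nhds (0:ℝ)] (fun _ : ℝ => (1:ℝ)) :=
      (hc.tendsto 0).isBigO_one ℝ
    have := (isBigO_refl (fun Y : ℝ => Y^4) (nhds (0:ℝ))).mul hP
    simpa using this
  · -- reduced map expansion
    have hid : (fun Y : ℝ => G γ Y - (-Y + (5/6) * ((2 - 3*γ)/(γ - 2)) * Y^3))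
        = fun Y : ℝ => B * Y^5 := by
      funext Y
      rw [hGf]
      ring
    rw [hid]
    exact (isBigO_refl (fun Y : ℝ => Y^5) (nhds (0:ℝ))).const_mul_left B
  · rw [hGf]; norm_num
  · rw [hGf, D1']; norm_num
  · have : iteratedDeriv 2 (G γ) = deriv (deriv (G γ)) := by
      rw [show (2:ℕ) = 1 + 1 from rfl, iteratedDeriv_succ, iteratedDeriv_one]
    rw [this, hGf, D1', D2']
    norm_num
  · have e2 : iteratedDeriv 2 (G γ) 0 = 0 := by
      have : iteratedDeriv 2 (G γ) = deriv (deriv (G γ)) := by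
        rw [show (2:ℕ) = 1 + 1 from rfl, iteratedDeriv_succ, iteratedDeriv_one]
      rw [this, hGf, D1', D2']
      norm_num
    have e3 : iteratedDeriv 3 (G γ) 0 = 2*(3*A) := by
      have : iteratedDeriv 3 (G γ) = deriv (deriv (deriv (G γ))) := by
        rw [show (3:ℕ) = 1 + 1 + 1 from rfl, iteratedDeriv_succ, iteratedDeriv_succ,
          iteratedDeriv_one]
      rw [this, hGf, D1', D2', D3']
      norm_num
    rw [e2, e3, hA]
    field_simp
    ring
  · rintro ⟨ha, hb⟩
    exact div_neg_of_pos_of_neg (by linarith) (by linarith)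
  · rintro ⟨ha, hb⟩
    exact div_pos_of_neg_of_neg (by linarith) (by linarith)
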